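/- Let α be a countable ordinal, let X_α be the completion of c₀₀ under ‖·‖_{S_α}, and let (e_k) be its unit vector basis. If (x_i)_{i=1}^p is a normalized block basis of (e_k) and k_i = max supp x_i for 1 ≤ i ≤ p, then ‖Σ_{i=1}^p a_i x_i‖ ≤ ‖Σ_{i=1}^p a_i e_{k_i}‖ for all scalars (a_i). -/

import Mathlib

open Ordinal Filter Topology

namespace LTIndex

/-- `E < F` for finite sets: `max E < min F` (with `max ∅ = 0`, `min ∅ = ∞`),
equivalently every element of `E` is less than every element of `F`. -/
def finLT (E F : Finset ℕ) : Prop := ∀ a ∈ E, ∀ b ∈ F, a < b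

/-- `min E` (junk value `0` when `E = ∅`). -/
noncomputable def minOf (E : Finset ℕ) : ℕ := sInf (E : Set ℕ)

/-- `{E₁, …, E_n}` is `𝓕`-admissible: the `Eᵢ` are nonempty, `E₁ < ⋯ < E_n`
and `{min E₁, …, min E_n} ∈ 𝓕`. -/
def IsAdmissible (𝓕 : Set (Finset ℕ)) (l : List (Finset ℕ)) : Prop :=
  (∀ E ∈ l, E.Nonempty) ∧ l.Chain' finLT ∧ (l.map minOf).toFinset ∈ 𝓕

/-- `𝓜[𝓝]`. -/
def famComp (M N : Set (Finset ℕ)) : Set (Finset ℕ) :=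
  {F | ∃ l : List (Finset ℕ), IsAdmissible M l ∧ (∀ E ∈ l, E ∈ N) ∧
    F = l.foldr (· ∪ ·) ∅}

/-- `(𝓜, 𝓝) = {M ∪ N : M < N, M ∈ 𝓜, N ∈ 𝓝}`. -/
def pairFam (M N : Set (Finset ℕ)) : Set (Finset ℕ) :=
  {F | ∃ A ∈ M, ∃ B ∈ N, finLT A B ∧ F = A ∪ B}

/-- `𝓜² = (𝓜, 𝓜)`. -/
def sqFam (M : Set (Finset ℕ)) : Set (Finset ℕ) := pairFam M M

/-- `S₀ = {{n} : n ∈ ℕ} ∪ {∅}`. -/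
def schreierZero : Set (Finset ℕ) := {F : Finset ℕ | F.card ≤ 1}

/-- `S₁ = {F : |F| ≤ min F}`. -/
noncomputable def schreierOne : Set (Finset ℕ) := {F : Finset ℕ | F.card ≤ minOf F}

/-- A ladder system: for every countable limit ordinal `o`, `seq o` is a strictly
increasing sequence of ordinals below `o` with supremum `o`. -/
def IsCtblLadder (seq : Ordinal.{0} → ℕ → Ordinal.{0}) : Prop :=
  ∀ o : Ordinal, o.card ≤ Cardinal.aleph0 → Order.IsSuccLimit o →
    StrictMono (seq o) ∧ (∀ n : ℕ, seq o n < o) ∧ (⨆ n : ℕ, seq o n) = o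

/-- The Schreier classes `S_α`, relative to a choice `seq` of ladders at limit
ordinals: `S₀` is the singletons together with `∅`, `S_{α+1} = S₁[S_α]`, and at a
limit `α` (with ladder `(α_n) = seq α`), `S_α = {F : F ∈ S_{α_n} for some n ≤ |F|}`. -/
noncomputable def schreier (seq : Ordinal.{0} → ℕ → Ordinal.{0}) (o : Ordinal.{0}) :
    Set (Finset ℕ) :=
  Ordinal.limitRecOn (motive := fun _ => Set (Finset ℕ)) o schreierZero
    (fun _ S => famComp schreierOne S)
    (fun o _ ih => {F | ∃ n : ℕ, n ≤ F.card ∧ ∃ h : seq o n < o, F ∈ ih (seq o n) h})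

/-- `σ_F(x) = ∑_{n ∈ F} |x n|`. -/
noncomputable def sigmaF (F : Finset ℕ) (x : ℕ →₀ ℝ) : ℝ := ∑ n ∈ F, |x n|

/-- `‖x‖_𝓕 = sup_{F ∈ 𝓕} σ_F(x)`. -/
noncomputable def famNorm (𝓕 : Set (Finset ℕ)) (x : ℕ →₀ ℝ) : ℝ :=
  sSup {r : ℝ | ∃ F ∈ 𝓕, r = sigmaF F x}

/-- `E x`: the coordinate restriction of `x` to `E`. -/
noncomputable def restr (E : Finset ℕ) (x : ℕ →₀ ℝ) : ℕ →₀ ℝ :=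
  Finsupp.filter (· ∈ E) x

/-- The norms `‖·‖_n` (when `Sadm = S_β`), resp. `‖·‖′_n` (when `Sadm = (S_β)²`):
`‖·‖₀ = ‖·‖_{S_α}` and
`‖x‖_{n+1} = max{‖x‖_n, sup{(1/2)∑ᵢ ‖Eᵢx‖_n : {E₁,…,E_j} Sadm-admissible}}`. -/
noncomputable def normSeq (Sa Sadm : Set (Finset ℕ)) : ℕ → (ℕ →₀ ℝ) → ℝ
  | 0, x => famNorm Sa x
  | n + 1, x =>
      max (normSeq Sa Sadm n x)
        (sSup {r : ℝ | ∃ l : List (Finset ℕ), IsAdmissible Sadm l ∧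
          r = (1 / 2) * ((l.map fun E => normSeq Sa Sadm n (restr E x)).sum)})

/-- `‖x‖_{T̃}` (resp. `‖x‖_{T̈}`): the limit (= supremum, the sequence being
nondecreasing) of the norms `‖x‖_n` (resp. `‖x‖′_n`). -/
noncomputable def tnorm (Sa Sadm : Set (Finset ℕ)) (x : ℕ →₀ ℝ) : ℝ :=
  ⨆ n : ℕ, normSeq Sa Sadm n x

/-- The families `𝓕_n` (with `Sadm = S_β`), resp. `𝓕′_n` (with `Sadm = (S_β)²`):
`𝓕₀ = S_α`, `𝓕_{n+1} = Sadm[𝓕_n]`. -/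
def famF (Sa Sadm : Set (Finset ℕ)) : ℕ → Set (Finset ℕ)
  | 0 => Sa
  | n + 1 => famComp Sadm (famF Sa Sadm n)

/-- The families `𝓖_n` (with `Sadm = S_β`), resp. `𝓖′_n` (with `Sadm = (S_β)²`),
reindexed: `famG Sadm n = 𝓖_{n+1}`, i.e. `famG Sadm 0 = 𝓖₁ = Sadm` and
`𝓖_{n+2} = Sadm[𝓖_{n+1}]`. -/
def famG (Sadm : Set (Finset ℕ)) : ℕ → Set (Finset ℕ)
  | 0 => Sadm
  | n + 1 => famComp Sadm (famG Sadm n)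

/-- Hereditary family. -/
def Hereditary (𝓕 : Set (Finset ℕ)) : Prop := ∀ A ∈ 𝓕, ∀ B ⊆ A, B ∈ 𝓕

/-- Spreading family. -/
def Spreading (𝓕 : Set (Finset ℕ)) : Prop :=
  ∀ A ∈ 𝓕, ∀ g : ℕ → ℕ, StrictMonoOn g (A : Set ℕ) → (∀ a ∈ A, a ≤ g a) →
    A.image g ∈ 𝓕

/-- Compactness of a family of finite sets, viewed inside `2^ℕ` (ℕ → Bool with the
product topology) via characteristic functions. -/
def CompactFam (𝓕 : Set (Finset ℕ)) : Prop :=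
  IsCompact ((fun A : Finset ℕ => fun n : ℕ => decide (n ∈ A)) '' 𝓕)

/-- Regular family: hereditary, spreading and compact. -/
def RegularFam (𝓕 : Set (Finset ℕ)) : Prop :=
  Hereditary 𝓕 ∧ Spreading 𝓕 ∧ CompactFam 𝓕

/-- The Cantor–Bendixson derivative of a family of finite subsets of ℕ: the set of
its limit points in the product topology of `2^ℕ` (a basic neighbourhood of `A` is
determined by an agreement of initial segments). -/
def famDeriv (𝓕 : Set (Finset ℕ)) : Set (Finset ℕ) :=
  {A | ∀ m : ℕ, ∃ B ∈ 𝓕, B ≠ A ∧ B.filter (· ≤ m) = A.filter (· ≤ m)}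

/-- Iterated Cantor–Bendixson derivatives `𝓕^{(o)}`. -/
noncomputable def famDerivIter (𝓕 : Set (Finset ℕ)) (o : Ordinal.{0}) : Set (Finset ℕ) :=
  Ordinal.limitRecOn (motive := fun _ => Set (Finset ℕ)) o 𝓕
    (fun _ S => famDeriv S)
    (fun o _ ih => ⋂ (o' : Ordinal) (h : o' < o), ih o' h)

/-- One step of the standard representation: `A` is obtained from the remainder `R`
as `R ∩ [1, k]` where `k` is the largest element of `F` with `R ∩ [1, k] ∈ 𝓝`. -/
def stepOf (N : Set (Finset ℕ)) (F R A : Finset ℕ) : Prop :=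
  ∃ k ∈ F, A = R.filter (· ≤ k) ∧ A ∈ N ∧
    ∀ k' ∈ F, R.filter (· ≤ k') ∈ N → k' ≤ k

/-- `IsStdRepFrom N F R L`: starting from remainder `R`, the list `L` is produced by
the greedy recursion defining the standard representation, exhausting `R`. -/
def IsStdRepFrom (N : Set (Finset ℕ)) (F : Finset ℕ) : Finset ℕ → List (Finset ℕ) → Prop
  | R, [] => R = ∅
  | R, A :: L => stepOf N F R A ∧ IsStdRepFrom N F (R \ A) L

/-- `L` is the standard representation of `F` (as an element of `𝓜[𝓝]`). -/
def IsStdRep (N : Set (Finset ℕ)) (F : Finset ℕ) (L : List (Finset ℕ)) : Prop :=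
  IsStdRepFrom N F F L

section Trees

variable {X : Type*}

/-- A tree on `X`: a set of nonempty finite sequences closed under nonempty initial
segments. -/
def IsTree (T : Set (List X)) : Prop :=
  ∀ l ∈ T, l ≠ [] ∧ ∀ m : ℕ, 0 < m → m < l.length → l.take m ∈ T

/-- A tree is well-founded if it has no infinite branch. -/
def WellFoundedTree (T : Set (List X)) : Prop :=
  ¬ ∃ f : ℕ → X, ∀ n : ℕ, (List.ofFn fun i : Fin (n + 1) => f i) ∈ T

/-- The derived tree `D(T)`. -/
def treeDeriv (T : Set (List X)) : Set (List X) :=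
  {l | l ∈ T ∧ ∃ x : X, l ++ [x] ∈ T}

/-- Iterated derived trees `D^o(T)`. -/
noncomputable def treeDerivIter (T : Set (List X)) (o : Ordinal.{0}) : Set (List X) :=
  Ordinal.limitRecOn (motive := fun _ => Set (List X)) o T
    (fun _ S => treeDeriv S)
    (fun o _ ih => ⋂ (o' : Ordinal) (h : o' < o), ih o' h)

/-- The order `o(T)` of a (well-founded) tree. -/
noncomputable def treeOrder (T : Set (List X)) : Ordinal.{0} :=
  sInf {o : Ordinal | treeDerivIter T o = ∅}

end Trees

section Banach

variable (X : Type) [NormedAddCommGroup X] [NormedSpace ℝ X]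

/-- `cs` witnesses that the node `l` is a finite block basis of `(e_i)`: each entry
of `l` is the (finite, nonzero) linear combination of the `e_i` given by the
corresponding entry of `cs`, and the supports are successive. -/
def IsBlockNode (e : ℕ → X) (l : List X) (cs : List (ℕ →₀ ℝ)) : Prop :=
  cs.length = l.length ∧
  (∀ (i : ℕ) (h : i < cs.length) (h' : i < l.length),
    l.get ⟨i, h'⟩ = (cs.get ⟨i, h⟩).sum fun n r => r • e n) ∧
  (∀ c ∈ cs, c ≠ 0) ∧
  cs.Chain' fun c d => finLT c.support d.support

/-- `e` is a (Schauder) basis of `X`. -/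
def IsSchauderBasis (e : ℕ → X) : Prop :=
  ∀ x : X, ∃! a : ℕ → ℝ,
    Tendsto (fun n => ∑ i ∈ Finset.range n, a i • e i) atTop (𝓝 x)

/-- An `ℓ¹`-`K` tree on `X`: a tree on the unit sphere of `X` such that every node
`(x₁, …, x_n)` satisfies `‖∑ aᵢ xᵢ‖ ≥ K⁻¹ ∑ |aᵢ|`. -/
def IsL1Tree (K : ℝ) (T : Set (List X)) : Prop :=
  IsTree T ∧ ∀ l ∈ T, (∀ x ∈ l, ‖x‖ = 1) ∧
    ∀ a : Fin l.length → ℝ, K⁻¹ * ∑ i, |a i| ≤ ‖∑ i : Fin l.length, a i • l.get i‖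

/-- `I(X, K)`: the supremum of the orders of well-founded `ℓ¹`-`K` trees on `X`. -/
noncomputable def bourgainIndexK (K : ℝ) : Ordinal.{0} :=
  ⨆ T : {T : Set (List X) // IsL1Tree X K T ∧ WellFoundedTree T}, treeOrder T.1

/-- The Bourgain `ℓ¹`-index `I(X) = sup_{1 ≤ K < ∞} I(X, K)`. -/
noncomputable def bourgainIndex : Ordinal.{0} :=
  ⨆ K : {K : ℝ // 1 ≤ K}, bourgainIndexK X K.1

/-- `I_b(X, K)` relative to the basis `e`: the supremum of the orders of
well-founded `ℓ¹`-`K` block trees on `X`. -/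
noncomputable def blockIndexK (e : ℕ → X) (K : ℝ) : Ordinal.{0} :=
  ⨆ T : {T : Set (List X) //
      IsL1Tree X K T ∧ (∀ l ∈ T, ∃ cs, IsBlockNode X e l cs) ∧ WellFoundedTree T},
    treeOrder T.1

/-- The block `ℓ¹`-index `I_b(X) = sup_{1 ≤ K < ∞} I_b(X, K)`. -/
noncomputable def blockIndex (e : ℕ → X) : Ordinal.{0} :=
  ⨆ K : {K : ℝ // 1 ≤ K}, blockIndexK X e K.1

end Banach

/-! Every Schreier family `S_α` is spreading. Given `F ∈ S_α`, the quantity `σ_F(∑ aᵢxᵢ)` is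
at most the sum of `|aᵢ|` over the blocks `xᵢ` that `F` meets, since `σ_F(xᵢ) ≤ ‖xᵢ‖ = 1`.
Moving the last point of `F` below each `kᵢ` up to `kᵢ`, and fixing the other points of `F`,
is an increasing map `g` with `g n ≥ n`; so `g(F) ∈ S_α`, and `g(F)` contains `kᵢ` for every
block `xᵢ` that `F` meets, whence `σ_{g(F)}(∑ aᵢ e_{kᵢ}) ≥ σ_F(∑ aᵢxᵢ)`. Mapping all of `F`,
rather than passing to a subset, avoids any appeal to heredity of `S_α`. -/

lemma minOf_mem {E : Finset ℕ} (hE : E.Nonempty) : minOf E ∈ E := by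
  exact_mod_cast Nat.sInf_mem (s := (E : Set ℕ)) (by exact_mod_cast hE)

lemma minOf_le {E : Finset ℕ} {b : ℕ} (hb : b ∈ E) : minOf E ≤ b :=
  Nat.sInf_le (by exact_mod_cast hb)

lemma minOf_image {E : Finset ℕ} {g : ℕ → ℕ} (hE : E.Nonempty)
    (hg : MonotoneOn g (E : Set ℕ)) : minOf (E.image g) = g (minOf E) := by
  refine le_antisymm (minOf_le (Finset.mem_image_of_mem g (minOf_mem hE))) ?_
  obtain ⟨b, hb, hgb⟩ := Finset.mem_image.mp (minOf_mem (hE.image g))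
  rw [← hgb]
  exact hg (minOf_mem hE) hb (minOf_le hb)

lemma mem_foldr_union {l : List (Finset ℕ)} {n : ℕ} :
    n ∈ l.foldr (· ∪ ·) ∅ ↔ ∃ E ∈ l, n ∈ E := by
  induction l <;> simp [*]

lemma image_foldr_union (g : ℕ → ℕ) (l : List (Finset ℕ)) :
    (l.foldr (· ∪ ·) ∅).image g = (l.map (·.image g)).foldr (· ∪ ·) ∅ := by
  induction l <;> simp [Finset.image_union, *]

lemma finLT_image {A E F : Finset ℕ} {g : ℕ → ℕ} (hg : StrictMonoOn g (A : Set ℕ))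
    (hE : E ⊆ A) (hF : F ⊆ A) (h : finLT E F) : finLT (E.image g) (F.image g) := by
  simp only [finLT, Finset.mem_image]
  rintro _ ⟨a, ha, rfl⟩ _ ⟨b, hb, rfl⟩
  exact hg (hE ha) (hF hb) (h a ha b hb)

lemma spreading_schreierZero : Spreading schreierZero :=
  fun _ hA _ _ _ => Finset.card_image_le.trans hA

lemma spreading_schreierOne : Spreading schreierOne := by
  intro A hA g hg hge
  rcases A.eq_empty_or_nonempty with rfl | hne
  · simpa using hA
  calc (A.image g).card ≤ A.card := Finset.card_image_le
    _ ≤ minOf A := hA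
    _ ≤ g (minOf A) := hge _ (minOf_mem hne)
    _ = minOf (A.image g) := (minOf_image hne hg.monotoneOn).symm

theorem spreading_famComp {M N : Set (Finset ℕ)} (hM : Spreading M) (hN : Spreading N) :
    Spreading (famComp M N) := by
  rintro _ ⟨l, ⟨hne, hchain, hmins⟩, hmem, rfl⟩ g hg hge
  have hsub : ∀ E ∈ l, E ⊆ l.foldr (· ∪ ·) ∅ :=
    fun E hE _ hn => mem_foldr_union.2 ⟨E, hE, hn⟩
  have hgE : ∀ E ∈ l, StrictMonoOn g (E : Set ℕ) :=
    fun E hE => hg.mono (by exact_mod_cast hsub E hE)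
  have hmins_sub : (l.map minOf).toFinset ⊆ l.foldr (· ∪ ·) ∅ := by
    intro u hu
    obtain ⟨E, hE, rfl⟩ := List.mem_map.1 (List.mem_toFinset.1 hu)
    exact hsub E hE (minOf_mem (hne E hE))
  have hmins_image :
      ((l.map (·.image g)).map minOf).toFinset = (l.map minOf).toFinset.image g := by
    have hmap : (l.map (·.image g)).map minOf = (l.map minOf).map g := by
      rw [List.map_map, List.map_map]
      exact List.map_congr_left fun E hE => minOf_image (hne E hE) (hgE E hE).monotoneOn
    ext n
    simp [hmap]
  refine ⟨l.map (·.image g), ⟨?_, ?_, ?_⟩, ?_, image_foldr_union g l⟩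
  · simp only [List.mem_map]
    rintro _ ⟨E, hE, rfl⟩
    exact (hne E hE).image g
  · exact (List.isChain_map _).2 <| hchain.imp_of_mem_imp
      fun E F hE hF => finLT_image hg (hsub E hE) (hsub F hF)
  · rw [hmins_image]
    exact hM _ hmins g (hg.mono (by exact_mod_cast hmins_sub)) fun u hu => hge u (hmins_sub hu)
  · simp only [List.mem_map]
    rintro _ ⟨E, hE, rfl⟩
    exact hN E (hmem E hE) g (hgE E hE) fun n hn => hge n (hsub E hE hn)

lemma schreier_zero (seq : Ordinal → ℕ → Ordinal) : schreier seq 0 = schreierZero :=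
  Ordinal.limitRecOn_zero (motive := fun _ => Set (Finset ℕ)) _ _ _

lemma schreier_add_one (seq : Ordinal → ℕ → Ordinal) (o : Ordinal) :
    schreier seq (o + 1) = famComp schreierOne (schreier seq o) :=
  Ordinal.limitRecOn_add_one (motive := fun _ => Set (Finset ℕ)) _ _ _ _

lemma schreier_limit (seq : Ordinal → ℕ → Ordinal) {o : Ordinal} (ho : Order.IsSuccLimit o) :
    schreier seq o =
      {F | ∃ n : ℕ, n ≤ F.card ∧ ∃ _ : seq o n < o, F ∈ schreier seq (seq o n)} :=
  Ordinal.limitRecOn_limit (motive := fun _ => Set (Finset ℕ)) _ _ _ _ ho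

theorem spreading_schreier (seq : Ordinal → ℕ → Ordinal) (o : Ordinal) :
    Spreading (schreier seq o) := by
  induction o using Ordinal.limitRecOn with
  | zero => rw [schreier_zero]; exact spreading_schreierZero
  | add_one o ih =>
    rw [schreier_add_one]
    exact spreading_famComp spreading_schreierOne ih
  | limit o ho ih =>
    rw [schreier_limit seq ho]
    rintro A ⟨n, hn, hlt, hA⟩ g hg hge
    exact ⟨n, (Finset.card_image_of_injOn hg.injOn).symm ▸ hn, hlt, ih _ hlt A hA g hg hge⟩

section SnapUp

/-- Moves `a` up to the nearest `k ∈ K` unless this would jump over a point of `F`. -/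
def snapUp (F K : Finset ℕ) (a : ℕ) : ℕ :=
  if h : ∃ k, k ∈ K ∧ a ≤ k ∧ ∀ b ∈ F, a < b → k < b then Nat.find h else a

variable {F K : Finset ℕ}

lemma le_snapUp (a : ℕ) : a ≤ snapUp F K a := by
  unfold snapUp
  split_ifs with h
  · exact (Nat.find_spec h).2.1
  · exact le_rfl

lemma snapUp_strictMonoOn : StrictMonoOn (snapUp F K) (F : Set ℕ) := by
  intro a _ b hb hab
  refine lt_of_lt_of_le ?_ (le_snapUp b)
  unfold snapUp
  split_ifs with h
  · exact (Nat.find_spec h).2.2 b hb hab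
  · exact hab

lemma snapUp_eq {a k : ℕ} (hk : k ∈ K) (hak : a ≤ k) (hF : ∀ b ∈ F, a < b → k < b)
    (hK : ∀ k' ∈ K, a ≤ k' → k ≤ k') : snapUp F K a = k := by
  have h : ∃ k, k ∈ K ∧ a ≤ k ∧ ∀ b ∈ F, a < b → k < b := ⟨k, hk, hak, hF⟩
  rw [snapUp, dif_pos h]
  exact le_antisymm (Nat.find_min' h ⟨hk, hak, hF⟩)
    (hK _ (Nat.find_spec h).1 (Nat.find_spec h).2.1)

/-- The preimage is the last point of `F` below `k`. -/
lemma mem_image_snapUp {k n : ℕ} (hk : k ∈ K) (hn : n ∈ F) (hnk : n ≤ k)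
    (hK : ∀ k' ∈ K, k' < k → k' < n) : k ∈ F.image (snapUp F K) := by
  have hne : (F.filter (· ≤ k)).Nonempty := ⟨n, Finset.mem_filter.2 ⟨hn, hnk⟩⟩
  set m := (F.filter (· ≤ k)).max' hne
  obtain ⟨hmF, hmk⟩ := Finset.mem_filter.1 ((F.filter (· ≤ k)).max'_mem hne)
  have hle_m : ∀ b ∈ F, b ≤ k → b ≤ m := fun b hb hbk =>
    (F.filter (· ≤ k)).le_max' b (Finset.mem_filter.2 ⟨hb, hbk⟩)
  refine Finset.mem_image.2 ⟨m, hmF, snapUp_eq hk hmk (fun b hb hmb => ?_) fun k' hk' hmk' => ?_⟩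
  · by_contra! hbk
    exact (hle_m b hb hbk).not_gt hmb
  · by_contra! hk'k
    exact (hK k' hk' hk'k).not_ge ((hle_m n hn hnk).trans hmk')

end SnapUp

lemma sigmaF_nonneg (F : Finset ℕ) (y : ℕ →₀ ℝ) : 0 ≤ sigmaF F y :=
  Finset.sum_nonneg fun _ _ => abs_nonneg _

lemma sigmaF_le_sigmaF_support (F : Finset ℕ) (y : ℕ →₀ ℝ) :
    sigmaF F y ≤ sigmaF y.support y := by
  classical
  calc sigmaF F y = ∑ n ∈ F ∩ y.support, |y n| := by
        refine (Finset.sum_subset Finset.inter_subset_left fun n _ hn => ?_).symm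
        simp_all
    _ ≤ sigmaF y.support y :=
        Finset.sum_le_sum_of_subset_of_nonneg Finset.inter_subset_right
          fun _ _ _ => abs_nonneg _

lemma sigmaF_eq_zero_of_disjoint {F : Finset ℕ} {y : ℕ →₀ ℝ} (h : Disjoint F y.support) :
    sigmaF F y = 0 :=
  Finset.sum_eq_zero fun n hn => by
    simpa using Finset.disjoint_left.1 h hn

lemma sigmaF_sum_smul_le {ι : Type*} (s : Finset ι) (F : Finset ℕ) (c : ι → ℝ)
    (x : ι → ℕ →₀ ℝ) : sigmaF F (∑ i ∈ s, c i • x i) ≤ ∑ i ∈ s, |c i| * sigmaF F (x i) := by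
  unfold sigmaF
  calc ∑ n ∈ F, |(∑ i ∈ s, c i • x i) n| ≤ ∑ n ∈ F, ∑ i ∈ s, |c i| * |x i n| := by
        gcongr with n
        rw [Finsupp.finsetSum_apply]
        refine (Finset.abs_sum_le_sum_abs _ _).trans_eq ?_
        simp only [Finsupp.smul_apply, _root_.smul_eq_mul, abs_mul]
    _ = ∑ i ∈ s, |c i| * ∑ n ∈ F, |x i n| := by
        rw [Finset.sum_comm]
        simp only [Finset.mul_sum]

lemma sigmaF_le_famNorm {𝓕 : Set (Finset ℕ)} {F : Finset ℕ} (hF : F ∈ 𝓕) (y : ℕ →₀ ℝ) :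
    sigmaF F y ≤ famNorm 𝓕 y :=
  le_csSup ⟨sigmaF y.support y, by rintro _ ⟨G, -, rfl⟩; exact sigmaF_le_sigmaF_support G y⟩
    ⟨F, hF, rfl⟩

lemma famNorm_nonneg (𝓕 : Set (Finset ℕ)) (y : ℕ →₀ ℝ) : 0 ≤ famNorm 𝓕 y :=
  Real.sSup_nonneg <| by rintro _ ⟨F, -, rfl⟩; exact sigmaF_nonneg F y

lemma famNorm_le {𝓕 : Set (Finset ℕ)} {y : ℕ →₀ ℝ} {r : ℝ} (hr : 0 ≤ r)
    (h : ∀ F ∈ 𝓕, sigmaF F y ≤ r) : famNorm 𝓕 y ≤ r :=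
  Real.sSup_le (by rintro _ ⟨F, hF, rfl⟩; exact h F hF) hr

lemma sum_smul_single_apply {ι : Type*} [Fintype ι] {k : ι → ℕ} (hk : Function.Injective k)
    (c : ι → ℝ) (j : ι) : (∑ i, c i • Finsupp.single (k i) (1 : ℝ)) (k j) = c j := by
  rw [Finsupp.finsetSum_apply, Finset.sum_eq_single j (fun i _ hij => by simp [hk.ne hij])
    (by simp)]
  simp

theorem famNorm_sum_smul_le_of_spreading {𝓕 : Set (Finset ℕ)} (h𝓕 : Spreading 𝓕) {p : ℕ}
    (x : Fin p → ℕ →₀ ℝ) (k : Fin p → ℕ) (hk : ∀ i, IsGreatest ((x i).support : Set ℕ) (k i))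
    (hblock : ∀ i j : Fin p, i < j → finLT (x i).support (x j).support)
    (hnorm : ∀ i, famNorm 𝓕 (x i) ≤ 1) (c : Fin p → ℝ) :
    famNorm 𝓕 (∑ i, c i • x i) ≤ famNorm 𝓕 (∑ i, c i • Finsupp.single (k i) (1 : ℝ)) := by
  classical
  set z := ∑ i, c i • Finsupp.single (k i) (1 : ℝ)
  have hk_lt : ∀ i j, i < j → ∀ n ∈ (x j).support, k i < n :=
    fun i j hij n hn => hblock i j hij _ (hk i).1 n hn
  have hk_mono : StrictMono k := fun i j hij => hk_lt i j hij _ (hk j).1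
  refine famNorm_le (famNorm_nonneg 𝓕 z) fun F hF => ?_
  set g := snapUp F (Finset.univ.image k)
  set I := Finset.univ.filter fun i => ¬Disjoint F (x i).support
  have hkI : I.image k ⊆ F.image g := by
    simp only [Finset.image_subset_iff, I, Finset.mem_filter, Finset.not_disjoint_iff]
    rintro i ⟨-, n, hnF, hn⟩
    refine mem_image_snapUp (Finset.mem_image_of_mem k (Finset.mem_univ i)) hnF ((hk i).2 hn) ?_
    simp only [Finset.mem_image, Finset.mem_univ, true_and]
    rintro _ ⟨j, rfl⟩ hji
    exact hk_lt j i (hk_mono.lt_iff_lt.1 hji) n hn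
  calc sigmaF F (∑ i, c i • x i) ≤ ∑ i, |c i| * sigmaF F (x i) := sigmaF_sum_smul_le _ _ _ _
    _ ≤ ∑ i ∈ I, |c i| := by
        rw [Finset.sum_filter]
        gcongr with i
        split_ifs with h
        · rw [sigmaF_eq_zero_of_disjoint h, mul_zero]
        · exact mul_le_of_le_one_right (abs_nonneg _) ((sigmaF_le_famNorm hF _).trans (hnorm i))
    _ = ∑ n ∈ I.image k, |z n| := by
        rw [Finset.sum_image hk_mono.injective.injOn]
        simp only [z, sum_smul_single_apply hk_mono.injective]
    _ ≤ sigmaF (F.image g) z :=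
        Finset.sum_le_sum_of_subset_of_nonneg hkI fun _ _ _ => abs_nonneg _
    _ ≤ famNorm 𝓕 z :=
        sigmaF_le_famNorm (h𝓕 F hF g snapUp_strictMonoOn fun a _ => le_snapUp a) z

theorem statement18_general (seq : Ordinal → ℕ → Ordinal)
    (a : Ordinal)
    (p : ℕ) (x : Fin p → (ℕ →₀ ℝ))
    (hx0 : ∀ i, x i ≠ 0)
    (hblock : ∀ i j : Fin p, i < j → finLT (x i).support (x j).support)
    (hnorm : ∀ i, famNorm (schreier seq a) (x i) = 1)
    (c : Fin p → ℝ) :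
    famNorm (schreier seq a) (∑ i, c i • x i) ≤
      famNorm (schreier seq a)
        (∑ i, c i • Finsupp.single ((x i).support.sup id) (1 : ℝ)) := by
  have hmax : ∀ i, IsGreatest ((x i).support : Set ℕ) ((x i).support.sup id) := fun i => by
    have hne := Finsupp.support_nonempty_iff.2 (hx0 i)
    rw [← Finset.sup'_eq_sup hne, ← Finset.max'_eq_sup']
    exact Finset.isGreatest_max' _ hne
  exact famNorm_sum_smul_le_of_spreading (spreading_schreier seq a) x _ hmax hblock
    (fun i => (hnorm i).le) c

/-- final Remark of the paper: in the Schreier space `X_α`, if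
`(x_i)_{i=1}^p` is a normalized block basis of the unit vector basis `(e_k)` and
`k_i = max supp x_i`, then `‖∑ a_i x_i‖ ≤ ‖∑ a_i e_{k_i}‖` for all scalars. -/
theorem statement18 (seq : Ordinal → ℕ → Ordinal) (hseq : IsCtblLadder seq)
    (a : Ordinal) (ha : a.card ≤ Cardinal.aleph0)
    (p : ℕ) (x : Fin p → (ℕ →₀ ℝ))
    (hx0 : ∀ i, x i ≠ 0)
    (hblock : ∀ i j : Fin p, i < j → finLT (x i).support (x j).support)
    (hnorm : ∀ i, famNorm (schreier seq a) (x i) = 1)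
    (c : Fin p → ℝ) :
    famNorm (schreier seq a) (∑ i, c i • x i) ≤
      famNorm (schreier seq a)
        (∑ i, c i • Finsupp.single ((x i).support.sup id) (1 : ℝ)) :=
  statement18_general seq a p x hx0 hblock hnorm c

end LTIndex
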